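/- arXiv:1308.5490 — 4 statements merged into one kernel-verified Lean document; each statement's English description precedes it below -/
import Mathlib

section
/- If π and ρ are k-permutations of [n] with the same cycle type, then there exists a permutation σ of [n] such that σ∘π∘σ^{-1} restricted to [k] equals ρ, where σ maps [k] onto [k]. -/
/-!
Extend a `k`-permutation `π` by the identity outside `[k]` to a self-map `f` of `ℕ`. Since `f` is
injective on `[k]` and fixes everything else, the forward orbits through `[k]` are cycles inside
`[k]` and paths leaving `[k]` at an endpoint. Representing a cycle by its least element and a path
by its unique point without a preimage in `[k]`, every point of `[k]`, and every endpoint, is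
`f^[j] s` for a unique representative `s` and offset `j`. Equal cycle types give, for each kind
and length, a bijection between the representatives of `π` and of `ρ`; transporting `f^[j] s` to
`g^[j] s'` is a bijection intertwining the two maps on `[k]`, and it extends to a permutation of
`[n]`.
-/

attribute [local instance] Classical.propDecidable

def arrangementGraph (n k : ℕ) :
    SimpleGraph {π : Fin k → Fin n // Function.Injective π} where
  Adj π ρ := ∃! i, π.1 i ≠ ρ.1 i
  symm := by
    constructor
    rintro π ρ ⟨i, hi, hu⟩
    exact ⟨i, hi.symm, fun j hj => hu j hj.symm⟩
  loopless := by constructor; rintro π ⟨i, hi, -⟩; exact hi rfl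

/-- Extend a `k`-permutation `π : [k] → [n]` to a map `ℕ → ℕ` fixing everything
outside `{0,…,k-1}`, so that its dynamics encode the cycles and paths of `π`. -/
def extFun {n k : ℕ} (π : Fin k → Fin n) : ℕ → ℕ :=
  fun u => if h : u < k then (π ⟨u, h⟩ : ℕ) else u

/-- The number of elements of `[k]` lying on a cycle of length `i` of `π`. -/
noncomputable def cyclicCount {n k : ℕ} (π : Fin k → Fin n) (i : ℕ) : ℕ :=
  Nat.card {u : ℕ // u < k ∧ Function.minimalPeriod (extFun π) u = i}

/-- The number of paths of length `i` in the cyclic decomposition of `π`. -/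
noncomputable def pathCount {n k : ℕ} (π : Fin k → Fin n) (i : ℕ) : ℕ :=
  Nat.card {u : ℕ // u < k ∧ (∀ w, w < k → extFun π w ≠ u) ∧
    sInf {ℓ : ℕ | k ≤ (extFun π)^[ℓ] u} = i}

/-- Two `k`-permutations have the same cycle type iff for every `i` they have the same
number of cycles of length `i` and the same number of paths of length `i`. -/
def SameCycleType {n k : ℕ} (π ρ : Fin k → Fin n) : Prop :=
  ∀ i, cyclicCount π i = cyclicCount ρ i ∧ pathCount π i = pathCount ρ i

open Function Set

theorem Function.iterate_mem_periodicPts {α : Type*} {f : α → α} {x : α}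
    (hx : x ∈ periodicPts f) (n : ℕ) : f^[n] x ∈ periodicPts f :=
  let ⟨m, hm, hp⟩ := hx
  ⟨m, hm, hp.apply_iterate n⟩

theorem Function.exists_iterate_iterate_eq {α : Type*} {f : α → α} {x : α}
    (hx : x ∈ periodicPts f) (n : ℕ) : ∃ m, f^[m] (f^[n] x) = x := by
  refine ⟨minimalPeriod f x * n - n, ?_⟩
  rw [← iterate_add_apply,
    Nat.sub_add_cancel (Nat.le_mul_of_pos_left n (minimalPeriod_pos_of_mem_periodicPts hx))]
  exact ((isPeriodicPt_minimalPeriod f x).mul_const n).eq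

theorem Function.iterate_mem_periodicPts_of_iterate_eq {α : Type*} {f : α → α} {x : α}
    {a b : ℕ} (hab : a < b) (h : f^[a] x = f^[b] x) : f^[a] x ∈ periodicPts f := by
  refine mk_mem_periodicPts (Nat.sub_pos_of_lt hab) ?_
  change f^[b - a] (f^[a] x) = f^[a] x
  rw [← iterate_add_apply, Nat.sub_add_cancel hab.le, h]

theorem Fin.val_finRotate {n : ℕ} (j : Fin n) : (finRotate n j : ℕ) = (j + 1) % n := by
  cases n with
  | zero => exact j.elim0
  | succ n =>
    rw [coe_finRotate]
    split_ifs with h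
    · simp [h]
    · rw [Nat.mod_eq_of_lt (by have := Fin.val_lt_last h; omega)]

namespace KPerm

variable {f : ℕ → ℕ} {k : ℕ}

theorem iterate_eq_of_le_iterate (hfix : ∀ u, k ≤ u → f u = u) {u a b : ℕ}
    (h : k ≤ f^[a] u) (hab : a ≤ b) : f^[b] u = f^[a] u := by
  obtain ⟨c, rfl⟩ := Nat.exists_eq_add_of_le hab
  rw [Nat.add_comm, iterate_add_apply, iterate_fixed (hfix _ h)]

theorem iterate_lt_of_mem_periodicPts (hfix : ∀ u, k ≤ u → f u = u) {u : ℕ} (hu : u < k)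
    (hp : u ∈ periodicPts f) (j : ℕ) : f^[j] u < k := by
  by_contra! hj
  have hper : f^[minimalPeriod f u * (j + 1)] u = u :=
    ((isPeriodicPt_minimalPeriod f u).mul_const _).eq
  have hle : j ≤ minimalPeriod f u * (j + 1) :=
    (Nat.le_succ j).trans (Nat.le_mul_of_pos_left _ (minimalPeriod_pos_of_mem_periodicPts hp))
  rw [iterate_eq_of_le_iterate hfix hj hle] at hper
  omega

theorem eq_of_iterate_eq_of_iterate_lt (hinj : InjOn f (Iio k)) {u v a : ℕ}
    (hu : ∀ i < a, f^[i] u < k)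
    (hv : ∀ i < a, f^[i] v < k) (h : f^[a] u = f^[a] v) : u = v := by
  induction a with
  | zero => exact h
  | succ a ih =>
    rw [iterate_succ_apply', iterate_succ_apply'] at h
    exact ih (fun i hi => hu i (by omega)) (fun i hi => hv i (by omega))
      (hinj (hu a (by omega)) (hv a (by omega)) h)

theorem mem_periodicPts_of_iterate (hinj : InjOn f (Iio k)) (hfix : ∀ u, k ≤ u → f u = u)
    {x j : ℕ} (hx : ∀ i ≤ j, f^[i] x < k) (hp : f^[j] x ∈ periodicPts f) :
    x ∈ periodicPts f := by
  have hall : ∀ i, f^[i] x < k := fun i => by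
    rcases le_or_gt i j with h | h
    · exact hx i h
    · rw [← Nat.sub_add_cancel h.le, iterate_add_apply]
      exact iterate_lt_of_mem_periodicPts hfix (hx j le_rfl) hp _
  refine mk_mem_periodicPts (minimalPeriod_pos_of_mem_periodicPts hp)
    (eq_of_iterate_eq_of_iterate_lt hinj (a := j) (fun i _ => ?_) (fun i _ => hall i) ?_)
  · rw [← iterate_add_apply]; exact hall _
  · rw [← iterate_add_apply, Nat.add_comm, iterate_add_apply]; exact iterate_minimalPeriod

theorem exists_le_iterate (hinj : InjOn f (Iio k)) (hfix : ∀ u, k ≤ u → f u = u) {u : ℕ}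
    (hu : u ∉ periodicPts f) : ∃ ℓ, k ≤ f^[ℓ] u := by
  by_contra! hall
  obtain ⟨a, b, hne, hab⟩ :=
    Finite.exists_ne_map_eq_of_infinite fun i : ℕ => (⟨f^[i] u, hall i⟩ : Fin k)
  wlog hlt : a < b generalizing a b
  · exact this b a hne.symm hab.symm (by omega)
  exact hu (mem_periodicPts_of_iterate hinj hfix (fun i _ => hall i)
    (iterate_mem_periodicPts_of_iterate_eq hlt (congrArg Fin.val hab)))

section

variable (f k)

def IsCycleStart (s : ℕ) : Prop := s < k ∧ s ∈ periodicPts f ∧ ∀ j, s ≤ f^[j] s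

def IsPathStart (s : ℕ) : Prop := s < k ∧ ∀ w < k, f w ≠ s

noncomputable def exitTime (u : ℕ) : ℕ := sInf {ℓ | k ≤ f^[ℓ] u}

abbrev CycleStarts (i : ℕ) : Type := {s // IsCycleStart f k s ∧ minimalPeriod f s = i}

abbrev PathStarts (i : ℕ) : Type := {s // IsPathStart f k s ∧ exitTime f k s = i}

/-- The point `f^[j] s` on the cycle or path starting at `s`; a path of `i` steps has `i + 1`
points, the last of which is its endpoint outside `[k]`. -/
abbrev Piece : Type :=
  (Σ i, CycleStarts f k i × Fin i) ⊕ (Σ i, PathStarts f k i × Fin (i + 1))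

end

theorem iterate_lt_of_lt_exitTime {u j : ℕ} (h : j < exitTime f k u) : f^[j] u < k := by
  by_contra! hj
  exact (Nat.sInf_le (show j ∈ {ℓ | k ≤ f^[ℓ] u} from hj)).not_gt h

theorem le_iterate_exitTime (hinj : InjOn f (Iio k)) (hfix : ∀ u, k ≤ u → f u = u) {u : ℕ}
    (hu : u ∉ periodicPts f) : k ≤ f^[exitTime f k u] u :=
  Nat.sInf_mem (exists_le_iterate hinj hfix hu)

theorem IsPathStart.notMem_periodicPts (hfix : ∀ u, k ≤ u → f u = u) {s : ℕ}
    (hs : IsPathStart f k s) : s ∉ periodicPts f := fun hp => by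
  refine hs.2 _ (iterate_lt_of_mem_periodicPts hfix hs.1 hp (minimalPeriod f s - 1)) ?_
  rw [← iterate_succ_apply' f, Nat.succ_eq_add_one,
    Nat.sub_add_cancel (minimalPeriod_pos_of_mem_periodicPts hp)]
  exact iterate_minimalPeriod

theorem IsPathStart.iterate_notMem_periodicPts (hinj : InjOn f (Iio k))
    (hfix : ∀ u, k ≤ u → f u = u) {s j : ℕ} (hs : IsPathStart f k s) (hj : j < exitTime f k s) :
    f^[j] s ∉ periodicPts f := fun hp =>
  hs.notMem_periodicPts hfix <| mem_periodicPts_of_iterate hinj hfix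
    (fun _ hi => iterate_lt_of_lt_exitTime (hi.trans_lt hj)) hp

theorem IsPathStart.eq_of_iterate_eq (hinj : InjOn f (Iio k)) {s t j j' : ℕ}
    (hs : IsPathStart f k s) (ht : IsPathStart f k t) (hj : j ≤ exitTime f k s)
    (hj' : j' ≤ exitTime f k t) (h : f^[j] s = f^[j'] t) : s = t ∧ j = j' := by
  wlog hle : j ≤ j' generalizing s t j j'
  · exact (this ht hs hj' hj h.symm (by omega)).imp Eq.symm Eq.symm
  have hst : s = f^[j' - j] t := by
    refine eq_of_iterate_eq_of_iterate_lt hinj (a := j)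
      (fun i hi => iterate_lt_of_lt_exitTime (by omega))
      (fun i hi => ?_) ?_
    · rw [← iterate_add_apply]; exact iterate_lt_of_lt_exitTime (by omega)
    · rw [← iterate_add_apply, Nat.add_sub_cancel' hle]; exact h
  obtain rfl | hlt := eq_or_lt_of_le hle
  · simpa using hst
  · refine (hs.2 (f^[j' - j - 1] t) (iterate_lt_of_lt_exitTime (by omega)) ?_).elim
    rw [← iterate_succ_apply' f, hst]
    congr 1
    omega

theorem IsCycleStart.eq_of_iterate_eq {s t j j' : ℕ} (hs : IsCycleStart f k s)
    (ht : IsCycleStart f k t) (hj : j < minimalPeriod f s) (hj' : j' < minimalPeriod f t)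
    (h : f^[j] s = f^[j'] t) : s = t ∧ j = j' := by
  have hle : ∀ {s t j j'}, IsCycleStart f k s → IsCycleStart f k t →
      f^[j] s = f^[j'] t → s ≤ t := fun {s t j j'} hs ht h => by
    obtain ⟨m, hm⟩ := exists_iterate_iterate_eq ht.2.1 j'
    calc s ≤ f^[m + j] s := hs.2.2 _
      _ = t := by rw [iterate_add_apply, h, hm]
  obtain rfl := (hle hs ht h).antisymm (hle ht hs h.symm)
  exact ⟨rfl, iterate_injOn_Iio_minimalPeriod hj hj' h⟩

theorem exists_isCycleStart (hfix : ∀ u, k ≤ u → f u = u) {u : ℕ} (hu : u < k)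
    (hp : u ∈ periodicPts f) :
    ∃ s j, IsCycleStart f k s ∧ j < minimalPeriod f s ∧ f^[j] s = u := by
  have hex : ∃ m a, f^[a] u = m := ⟨u, 0, rfl⟩
  obtain ⟨a, ha⟩ := Nat.find_spec hex
  have hsp : Nat.find hex ∈ periodicPts f := ha ▸ iterate_mem_periodicPts hp a
  obtain ⟨m, hm⟩ := exists_iterate_iterate_eq hp a
  refine ⟨Nat.find hex, m % minimalPeriod f (Nat.find hex),
    ⟨ha ▸ iterate_lt_of_mem_periodicPts hfix hu hp a, hsp,
      fun j => Nat.find_min' hex ⟨j + a, by rw [iterate_add_apply, ha]⟩⟩,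
    Nat.mod_lt _ (minimalPeriod_pos_of_mem_periodicPts hsp), ?_⟩
  rw [iterate_mod_minimalPeriod_eq, ← ha, hm]

theorem exists_isPathStart (hinj : InjOn f (Iio k)) (hfix : ∀ u, k ≤ u → f u = u) {u : ℕ}
    (hu : u < k) (hnp : u ∉ periodicPts f) :
    ∃ s j, IsPathStart f k s ∧ j < exitTime f k s ∧ f^[j] s = u := by
  let P j := ∃ s, (∀ i ≤ j, f^[i] s < k) ∧ f^[j] s = u
  -- the `j + 1` points of a chain ending at the non-periodic `u` are distinct
  have hbound : ∀ j, P j → j < k := by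
    rintro j ⟨s, hs, rfl⟩
    have hinj' : Injective fun i : Fin (j + 1) => (⟨f^[i] s, hs i (by omega)⟩ : Fin k) := by
      intro a b hab
      by_contra hne
      wlog hlt : (a : ℕ) < b generalizing a b
      · exact this hab.symm (Ne.symm hne) (by have := Fin.val_ne_of_ne hne; omega)
      refine hnp ?_
      have := iterate_mem_periodicPts
        (iterate_mem_periodicPts_of_iterate_eq hlt (congrArg Fin.val hab)) (j - a)
      rwa [← iterate_add_apply, Nat.sub_add_cancel (by omega)] at this
    simpa using Fintype.card_le_of_injective _ hinj'
  -- a longest chain inside `[k]` ending at `u` starts at a point without preimage in `[k]`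
  obtain ⟨s, hs, hsu⟩ : P (Nat.findGreatest P k) :=
    Nat.findGreatest_spec (Nat.zero_le k) ⟨u, fun i hi => by simpa [Nat.le_zero.1 hi], rfl⟩
  have hstart : IsPathStart f k s := by
    refine ⟨hs 0 (Nat.zero_le _), fun w hw hws => ?_⟩
    have hP : P (Nat.findGreatest P k + 1) := by
      refine ⟨w, fun i hi => ?_, by rw [iterate_succ_apply, hws, hsu]⟩
      rcases i with _ | i
      · exact hw
      · rw [iterate_succ_apply, hws]; exact hs i (by omega)
    exact Nat.findGreatest_is_greatest (P := P) (Nat.lt_succ_self _) (hbound _ hP).le hP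
  refine ⟨s, _, hstart, ?_, hsu⟩
  by_contra! hle
  exact (le_iterate_exitTime hinj hfix (hstart.notMem_periodicPts hfix)).not_gt (hs _ hle)

instance (i : ℕ) : Finite (CycleStarts f k i) :=
  Finite.of_injective (fun s => (⟨s.1, s.2.1.1⟩ : Fin k)) fun _ _ h =>
    Subtype.ext (congrArg Fin.val h)

instance (i : ℕ) : Finite (PathStarts f k i) :=
  Finite.of_injective (fun s => (⟨s.1, s.2.1.1⟩ : Fin k)) fun _ _ h =>
    Subtype.ext (congrArg Fin.val h)

theorem card_cycleStarts_mul (hfix : ∀ u, k ≤ u → f u = u) {i : ℕ} (hi : 0 < i) :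
    Nat.card (CycleStarts f k i) * i = Nat.card {u // u < k ∧ minimalPeriod f u = i} := by
  have hbij : Bijective fun p : CycleStarts f k i × Fin i =>
      (⟨f^[p.2] p.1.1, iterate_lt_of_mem_periodicPts hfix p.1.2.1.1 p.1.2.1.2.1 _,
        (minimalPeriod_apply_iterate p.1.2.1.2.1 _).trans p.1.2.2⟩ :
        {u // u < k ∧ minimalPeriod f u = i}) := by
    refine ⟨fun ⟨s, j⟩ ⟨t, j'⟩ h => ?_, fun ⟨u, hu, hui⟩ => ?_⟩
    · obtain ⟨hst, hjj⟩ := s.2.1.eq_of_iterate_eq t.2.1 (s.2.2.symm ▸ j.2) (t.2.2.symm ▸ j'.2)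
        (congrArg Subtype.val h)
      exact Prod.ext (Subtype.ext hst) (Fin.ext hjj)
    · obtain ⟨s, j, hs, hj, rfl⟩ := exists_isCycleStart hfix hu
        (minimalPeriod_pos_iff_mem_periodicPts.1 (hui ▸ hi))
      have hsi : minimalPeriod f s = i := (minimalPeriod_apply_iterate hs.2.1 j).symm.trans hui
      exact ⟨(⟨s, hs, hsi⟩, ⟨j, hsi ▸ hj⟩), rfl⟩
  simpa using Nat.card_congr (Equiv.ofBijective _ hbij)

theorem card_cycleStarts_eq {g : ℕ → ℕ} (hf : ∀ u, k ≤ u → f u = u)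
    (hg : ∀ u, k ≤ u → g u = u)
    (h : ∀ i, Nat.card {u // u < k ∧ minimalPeriod f u = i} =
      Nat.card {u // u < k ∧ minimalPeriod g u = i}) (i : ℕ) :
    Nat.card (CycleStarts f k i) = Nat.card (CycleStarts g k i) := by
  rcases Nat.eq_zero_or_pos i with rfl | hi
  · have {f : ℕ → ℕ} : IsEmpty (CycleStarts f k 0) :=
      ⟨fun s => (minimalPeriod_pos_of_mem_periodicPts s.2.1.2.1).ne' s.2.2⟩
    simp only [Nat.card_of_isEmpty]
  · refine Nat.eq_of_mul_eq_mul_right hi ?_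
    rw [card_cycleStarts_mul hf hi, card_cycleStarts_mul hg hi, h]

namespace Piece

def point : Piece f k → ℕ
  | .inl ⟨_, s, j⟩ => f^[j] s.1
  | .inr ⟨_, s, j⟩ => f^[j] s.1

def next : Piece f k → Piece f k
  | .inl ⟨i, s, j⟩ => .inl ⟨i, s, finRotate i j⟩
  | .inr ⟨i, s, j⟩ => .inr ⟨i, s, finRotate (i + 1) j⟩

def IsLast : Piece f k → Prop
  | .inl _ => False
  | .inr ⟨i, _, j⟩ => (j : ℕ) = i

theorem point_lt_iff (hinj : InjOn f (Iio k)) (hfix : ∀ u, k ≤ u → f u = u) :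
    ∀ p : Piece f k, p.point < k ↔ ¬ p.IsLast
  | .inl ⟨_, s, j⟩ => iff_of_true (iterate_lt_of_mem_periodicPts hfix s.2.1.1 s.2.1.2.1 j) id
  | .inr ⟨i, ⟨s, hs, hsi⟩, j⟩ => by
    have hj := j.2
    simp only [point, IsLast]
    refine ⟨fun h hji => ?_, fun hji => iterate_lt_of_lt_exitTime (by omega)⟩
    rw [hji, ← hsi] at h
    exact (le_iterate_exitTime hinj hfix (hs.notMem_periodicPts hfix)).not_gt h

theorem point_next :
    ∀ p : Piece f k, ¬ p.IsLast → p.next.point = f p.point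
  | .inl ⟨i, ⟨s, _, hsi⟩, j⟩, _ => by
    subst hsi
    simp only [point, next, Fin.val_finRotate]
    rw [iterate_mod_minimalPeriod_eq, iterate_succ_apply']
  | .inr ⟨i, s, j⟩, hj => by
    simp only [point, next]
    rw [coe_finRotate_of_ne_last (fun h => hj (by simp [IsLast, h])), iterate_succ_apply']

theorem point_injective (hinj : InjOn f (Iio k)) (hfix : ∀ u, k ≤ u → f u = u) :
    Injective (point : Piece f k → ℕ) := by
  have mixed : ∀ {s t j j'}, IsCycleStart f k s → IsPathStart f k t → j' ≤ exitTime f k t →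
      f^[j] s ≠ f^[j'] t := fun {s t j j'} hs ht hj' h => by
    rcases hj'.lt_or_eq with hlt | rfl
    · exact ht.iterate_notMem_periodicPts hinj hfix hlt (h ▸ iterate_mem_periodicPts hs.2.1 j)
    · exact (le_iterate_exitTime hinj hfix (ht.notMem_periodicPts hfix)).not_gt
        (h ▸ iterate_lt_of_mem_periodicPts hfix hs.1 hs.2.1 j)
  rintro (⟨_, ⟨s, hs, rfl⟩, j⟩ | ⟨_, ⟨s, hs, rfl⟩, j⟩)
    (⟨_, ⟨t, ht, rfl⟩, j'⟩ | ⟨_, ⟨t, ht, rfl⟩, j'⟩) h <;> simp only [point] at h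
  · obtain ⟨rfl, hjj⟩ := hs.eq_of_iterate_eq ht j.2 j'.2 h
    obtain rfl := Fin.ext hjj
    rfl
  · exact (mixed hs ht (Nat.lt_succ_iff.1 j'.2) h).elim
  · exact (mixed ht hs (Nat.lt_succ_iff.1 j.2) h.symm).elim
  · obtain ⟨rfl, hjj⟩ := hs.eq_of_iterate_eq hinj ht (Nat.lt_succ_iff.1 j.2)
      (Nat.lt_succ_iff.1 j'.2) h
    obtain rfl := Fin.ext hjj
    rfl

theorem exists_point_eq (hinj : InjOn f (Iio k)) (hfix : ∀ u, k ≤ u → f u = u) {u : ℕ}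
    (hu : u < k) : ∃ p : Piece f k, p.point = u := by
  by_cases hp : u ∈ periodicPts f
  · obtain ⟨s, j, hs, hj, rfl⟩ := exists_isCycleStart hfix hu hp
    exact ⟨.inl ⟨_, ⟨s, hs, rfl⟩, ⟨j, hj⟩⟩, rfl⟩
  · obtain ⟨s, j, hs, hj, rfl⟩ := exists_isPathStart hinj hfix hu hp
    exact ⟨.inr ⟨_, ⟨s, hs, rfl⟩, ⟨j, by omega⟩⟩, rfl⟩

theorem point_lt {n : ℕ} (hkn : k ≤ n) (hmaps : MapsTo f (Iio n) (Iio n)) :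
    ∀ p : Piece f k, p.point < n
  | .inl ⟨_, s, j⟩ => hmaps.iterate j (lt_of_lt_of_le s.2.1.1 hkn)
  | .inr ⟨_, s, j⟩ => hmaps.iterate j (lt_of_lt_of_le s.2.1.1 hkn)

def map {g : ℕ → ℕ} (φ : ∀ i, CycleStarts f k i ≃ CycleStarts g k i)
    (ψ : ∀ i, PathStarts f k i ≃ PathStarts g k i) : Piece f k ≃ Piece g k :=
  (Equiv.sigmaCongrRight fun i => (φ i).prodCongr (Equiv.refl _)).sumCongr
    (Equiv.sigmaCongrRight fun i => (ψ i).prodCongr (Equiv.refl _))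

variable {g : ℕ → ℕ} (φ : ∀ i, CycleStarts f k i ≃ CycleStarts g k i)
  (ψ : ∀ i, PathStarts f k i ≃ PathStarts g k i)

theorem map_next (p : Piece f k) : map φ ψ p.next = (map φ ψ p).next := by
  rcases p with ⟨i, s, j⟩ | ⟨i, s, j⟩ <;> rfl

theorem isLast_map (p : Piece f k) : (map φ ψ p).IsLast ↔ p.IsLast := by
  rcases p with ⟨i, s, j⟩ | ⟨i, s, j⟩ <;> rfl

end Piece

theorem exists_perm_conj_of_card_eq {n : ℕ} {g : ℕ → ℕ} (hkn : k ≤ n)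
    (hfinj : InjOn f (Iio k)) (hginj : InjOn g (Iio k))
    (hffix : ∀ u, k ≤ u → f u = u) (hgfix : ∀ u, k ≤ u → g u = u)
    (hfmaps : MapsTo f (Iio n) (Iio n)) (hgmaps : MapsTo g (Iio n) (Iio n))
    (hcyc : ∀ i, Nat.card (CycleStarts f k i) = Nat.card (CycleStarts g k i))
    (hpath : ∀ i, Nat.card (PathStarts f k i) = Nat.card (PathStarts g k i)) :
    ∃ σ : Equiv.Perm (Fin n), (∀ x : Fin n, (x : ℕ) < k ↔ (σ x : ℕ) < k) ∧
      ∀ x y : Fin n, (x : ℕ) < k → (y : ℕ) = f x → (σ y : ℕ) = g (σ x) := by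
  let M : Piece f k ≃ Piece g k :=
    Piece.map (fun i => (Finite.card_eq.1 (hcyc i)).some)
      (fun i => (Finite.card_eq.1 (hpath i)).some)
  let pf : Piece f k → Fin n := fun p => ⟨p.point, p.point_lt hkn hfmaps⟩
  let pg : Piece g k → Fin n := fun q => ⟨q.point, q.point_lt hkn hgmaps⟩
  have hpf : Injective pf := fun p q h => Piece.point_injective hfinj hffix (congrArg Fin.val h)
  have hpg : Injective pg := fun p q h => Piece.point_injective hginj hgfix (congrArg Fin.val h)
  have : Finite (Piece f k) := Finite.of_injective pf hpf
  obtain ⟨σ, hσ⟩ := Equiv.Perm.exists_extending_pair pf (pg ∘ M) hpf (hpg.comp M.injective)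
  have hσk (p : Piece f k) : (σ (pf p) : ℕ) < k ↔ (pf p : ℕ) < k := by
    rw [hσ]
    exact (Piece.point_lt_iff hginj hgfix _).trans
      ((Piece.isLast_map _ _ p).not.trans (Piece.point_lt_iff hfinj hffix p).symm)
  refine ⟨σ, fun x => ⟨fun hx => ?_, fun hx => ?_⟩, fun x y hx hy => ?_⟩
  · obtain ⟨p, hp⟩ := Piece.exists_point_eq hfinj hffix hx
    obtain rfl : pf p = x := Fin.ext hp
    exact (hσk p).2 hx
  · obtain ⟨q, hq⟩ := Piece.exists_point_eq hginj hgfix hx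
    obtain rfl : x = pf (M.symm q) := σ.injective (by rw [hσ]; exact Fin.ext (by simp [pg, hq]))
    exact (hσk _).1 hx
  · obtain ⟨p, hp⟩ := Piece.exists_point_eq hfinj hffix hx
    obtain rfl : pf p = x := Fin.ext hp
    have hlast : ¬ p.IsLast := (Piece.point_lt_iff hfinj hffix p).1 hx
    obtain rfl : y = pf p.next := Fin.ext (hy.trans (Piece.point_next p hlast).symm)
    simp only [hσ, comp_apply, pf, pg]
    rw [show M p.next = (M p).next from Piece.map_next _ _ p]
    exact Piece.point_next _ ((Piece.isLast_map _ _ p).not.2 hlast)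

end KPerm

theorem extFun_of_lt {n k : ℕ} (π : Fin k → Fin n) {u : ℕ} (hu : u < k) :
    extFun π u = π ⟨u, hu⟩ :=
  dif_pos hu

theorem extFun_of_le {n k : ℕ} (π : Fin k → Fin n) {u : ℕ} (hu : k ≤ u) : extFun π u = u :=
  dif_neg (not_lt.2 hu)

theorem injOn_extFun {n k : ℕ} {π : Fin k → Fin n} (hπ : Injective π) :
    InjOn (extFun π) (Iio k) := fun u hu v hv h => by
  rw [extFun_of_lt π hu, extFun_of_lt π hv] at h
  exact Fin.mk.inj_iff.1 (hπ (Fin.ext h))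

theorem mapsTo_extFun {n k : ℕ} (π : Fin k → Fin n) : MapsTo (extFun π) (Iio n) (Iio n) :=
  fun u hu => by
    unfold extFun
    split_ifs
    exacts [(π _).2, hu]

theorem card_pathStarts_extFun {n k : ℕ} (π : Fin k → Fin n) (i : ℕ) :
    Nat.card (KPerm.PathStarts (extFun π) k i) = pathCount π i :=
  Nat.card_congr (Equiv.subtypeEquivRight fun _ => and_assoc)

/-- If two `k`-permutations `π, ρ` of `[n]` have the same cycle type, then there is a
permutation `σ` of `[n]` mapping `[k]` onto `[k]` with `σ ∘ π ∘ σ⁻¹ = ρ` on `[k]`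
(equivalently `σ (π u) = ρ (σ u)` for all `u ∈ [k]`). -/
theorem sameCycleType_conjugate (n k : ℕ) (hkn : k ≤ n) (π ρ : Fin k → Fin n)
    (hπ : Function.Injective π) (hρ : Function.Injective ρ) (h : SameCycleType π ρ) :
    ∃ σ : Equiv.Perm (Fin n),
      ∃ hσ : ∀ i : Fin n, (i : ℕ) < k ↔ ((σ i : Fin n) : ℕ) < k,
        ∀ u : Fin k, σ (π u) =
          ρ ⟨((σ (Fin.castLE hkn u) : Fin n) : ℕ),
            (hσ (Fin.castLE hkn u)).mp (by simp)⟩ := by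
  obtain ⟨σ, hσk, hσ⟩ := KPerm.exists_perm_conj_of_card_eq hkn (injOn_extFun hπ) (injOn_extFun hρ)
    (fun _ => extFun_of_le π) (fun _ => extFun_of_le ρ) (mapsTo_extFun π) (mapsTo_extFun ρ)
    (KPerm.card_cycleStarts_eq (fun _ => extFun_of_le π) (fun _ => extFun_of_le ρ)
      fun i => (h i).1)
    fun i => by rw [card_pathStarts_extFun, card_pathStarts_extFun, (h i).2]
  refine ⟨σ, hσk, fun u => Fin.ext ?_⟩
  rw [hσ (Fin.castLE hkn u) (π u) u.2 (extFun_of_lt π u.2).symm, extFun_of_lt ρ]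
end

section
/- The arrangement graph A(n,2) is isomorphic to the line graph of the graph H_n obtained from the complete bipartite graph K_{n,n} by removing a perfect matching. -/
/-!
An injective pair `π = (i, j)` is sent to the edge `aᵢ bⱼ` of `Hₙ`, i.e. to the graph
`{(0, π 0), (1, π 1)}` of `π`. A vertex `(k, x)` lies on this edge iff `x = π k`, so two such edges
meet iff the pairs agree in some coordinate; for distinct pairs of length two this means that they
differ in exactly one coordinate, which is adjacency in `A(n,2)`.
-/

attribute [local instance] Classical.propDecidable

/-- The graph `Hₙ` obtained from the complete bipartite graph `K_{n,n}` by removing a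
perfect matching: vertices `aᵢ = (0,i)` and `bⱼ = (1,j)`, with `aᵢ ~ bⱼ` iff `i ≠ j`. -/
def matchingRemoved (n : ℕ) : SimpleGraph (Fin 2 × Fin n) where
  Adj p q := p.1 ≠ q.1 ∧ p.2 ≠ q.2
  symm := by constructor; rintro p q ⟨h1, h2⟩; exact ⟨h1.symm, h2.symm⟩
  loopless := by constructor; rintro p ⟨h, -⟩; exact h rfl

lemma existsUnique_ne_iff_fin_two {α : Type*} {f g : Fin 2 → α} :
    (∃! i, f i ≠ g i) ↔ f ≠ g ∧ ∃ i, f i = g i := by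
  simp only [ExistsUnique, ne_eq, funext_iff, Fin.exists_fin_two, Fin.forall_fin_two]
  tauto

section graphEdge

variable {α : Type*}

def graphEdge (π : Fin 2 → α) : Sym2 (Fin 2 × α) := s((0, π 0), (1, π 1))

lemma mem_graphEdge {π : Fin 2 → α} {v : Fin 2 × α} : v ∈ graphEdge π ↔ v.2 = π v.1 := by
  obtain ⟨i, a⟩ := v
  fin_cases i <;> simp [graphEdge, eq_comm]

lemma graphEdge_injective : Function.Injective (graphEdge (α := α)) := fun π ρ h =>
  funext fun i => mem_graphEdge.1 (h ▸ mem_graphEdge.2 rfl : (i, π i) ∈ graphEdge ρ)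

lemma exists_mem_graphEdge_and_mem_graphEdge_iff {π ρ : Fin 2 → α} :
    (∃ v, v ∈ graphEdge π ∧ v ∈ graphEdge ρ) ↔ ∃ i, π i = ρ i := by
  simp only [mem_graphEdge]
  constructor
  · rintro ⟨v, hπ, hρ⟩
    exact ⟨v.1, hπ.symm.trans hρ⟩
  · rintro ⟨i, h⟩
    exact ⟨(i, π i), rfl, h⟩

lemma exists_graphEdge_eq {p q : Fin 2 × α} (h : p.1 ≠ q.1) : ∃ π, graphEdge π = s(p, q) := by
  obtain ⟨i, a⟩ := p
  obtain ⟨j, b⟩ := q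
  fin_cases i <;> fin_cases j
  · exact absurd rfl h
  · exact ⟨![a, b], rfl⟩
  · exact ⟨![b, a], Sym2.eq_swap⟩
  · exact absurd rfl h

end graphEdge

namespace matchingRemoved

variable {n : ℕ}

lemma graphEdge_mem_edgeSet {π : Fin 2 → Fin n} :
    graphEdge π ∈ (matchingRemoved n).edgeSet ↔ Function.Injective π := by
  simp [graphEdge, matchingRemoved, Function.Injective, Fin.forall_fin_two, eq_comm]

lemma exists_graphEdge_eq_of_mem_edgeSet {e : Sym2 (Fin 2 × Fin n)}
    (he : e ∈ (matchingRemoved n).edgeSet) : ∃ π, graphEdge π = e := by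
  induction e using Sym2.ind with
  | _ p q => exact exists_graphEdge_eq he.1

def edgeOfArrangement (n : ℕ) :
    {π : Fin 2 → Fin n // Function.Injective π} → (matchingRemoved n).edgeSet :=
  fun π => ⟨graphEdge π.1, graphEdge_mem_edgeSet.2 π.2⟩

lemma edgeOfArrangement_bijective : Function.Bijective (edgeOfArrangement n) := by
  refine ⟨fun π ρ h => Subtype.ext <| graphEdge_injective <| congrArg Subtype.val h, ?_⟩
  rintro ⟨e, he⟩
  obtain ⟨π, rfl⟩ := exists_graphEdge_eq_of_mem_edgeSet he
  exact ⟨⟨π, graphEdge_mem_edgeSet.1 he⟩, rfl⟩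

lemma lineGraph_adj_edgeOfArrangement {π ρ : {π : Fin 2 → Fin n // Function.Injective π}} :
    (matchingRemoved n).lineGraph.Adj (edgeOfArrangement n π) (edgeOfArrangement n ρ) ↔
      (arrangementGraph n 2).Adj π ρ := by
  rw [SimpleGraph.lineGraph_adj_iff_exists, edgeOfArrangement_bijective.1.ne_iff,
    Ne, Subtype.ext_iff]
  exact (and_congr_right fun _ => exists_mem_graphEdge_and_mem_graphEdge_iff).trans
    existsUnique_ne_iff_fin_two.symm

end matchingRemoved

/-- `A(n,2)` is isomorphic to the line graph of `Hₙ`. -/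
theorem arrangementGraph_two_iso_lineGraph (n : ℕ) :
    Nonempty (arrangementGraph n 2 ≃g (matchingRemoved n).lineGraph) :=
  ⟨⟨Equiv.ofBijective _ matchingRemoved.edgeOfArrangement_bijective,
    matchingRemoved.lineGraph_adj_edgeOfArrangement⟩⟩
end

section
/- For n ≥ 3, the eigenvalues of the arrangement graph A(n,2) are: 2n-4 with multiplicity 1, n-2 with multiplicity n-1, n-4 with multiplicity n-1, and -2 with multiplicity n²-3n+1. -/
/-!
Write a vertex of `A(n,2)` as `v = (v₀, v₁)` and let `P_s` be the `0/1` matrix with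
`P_s v a = [v_s = a]`. Then `M_st = P_s P_tᵀ` records `v_s = w_t`, and the Gram relations
`P_tᵀ P_t = (n-1) I`, `P_tᵀ P_t' = J - I` (for `t ≠ t'`) close the products of the `M_st`
and `J` into a small commutative algebra. In it `S = M₀₀ + M₁₁ = A + 2I` satisfies
`S (S - (n-2)) (S - n) (S - 2(n-1)) = 0`, and `tr S^k` is explicit for `k ≤ 3`.
For a real symmetric matrix whose eigenvalues lie among `m` distinct known values, the traces
of its first `m` powers determine the multiplicities through an invertible Vandermonde system.
-/

attribute [local instance] Classical.propDecidable

open Polynomial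

open Finset Matrix

namespace Matrix.IsHermitian

variable {𝕜 ι : Type*} [RCLike 𝕜] [Fintype ι] [DecidableEq ι] {A : Matrix ι ι 𝕜}

theorem trace_pow_eq_sum_eigenvalues_pow (hA : A.IsHermitian) (k : ℕ) :
    (A ^ k).trace = ∑ i, (hA.eigenvalues i : 𝕜) ^ k := by
  conv_lhs => rw [hA.spectral_theorem, ← map_pow, Unitary.conjStarAlgAut_apply, trace_mul_cycle,
    Unitary.coe_star_mul_self, one_mul, diagonal_pow, trace_diagonal]
  rfl

theorem hasEigenvector_eigenvectorBasis (hA : A.IsHermitian) (i : ι) :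
    Module.End.HasEigenvector (toLin' A) (hA.eigenvalues i : 𝕜) (hA.eigenvectorBasis i) := by
  refine ⟨Module.End.mem_eigenspace_iff.mpr ?_,
    (WithLp.ofLp_eq_zero 2).ne.2 <| hA.eigenvectorBasis.orthonormal.ne_zero i⟩
  rw [toLin'_apply, hA.mulVec_eigenvectorBasis, RCLike.real_smul_eq_coe_smul (K := 𝕜)]

theorem eval_eigenvalues_eq_zero (hA : A.IsHermitian) {p : 𝕜[X]} (hp : aeval A p = 0)
    (i : ι) : p.eval (hA.eigenvalues i : 𝕜) = 0 := by
  have hv := hA.hasEigenvector_eigenvectorBasis i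
  have h := Module.End.aeval_apply_of_hasEigenvector (p := p) hv
  rw [show toLin' A = toLinAlgEquiv' A from rfl, aeval_algHom_apply, hp, map_zero] at h
  exact (smul_eq_zero.mp h.symm).resolve_right hv.2

theorem charpoly_eq_prod_pow_of_trace_pow {A : Matrix ι ι ℝ} (hA : A.IsHermitian) {m : ℕ}
    {r : Fin m → ℝ} (hr : Function.Injective r) (μ : Fin m → ℕ)
    (hroot : aeval A (∏ j, (X - C (r j))) = 0)
    (htrace : ∀ k : Fin m, (A ^ (k : ℕ)).trace = ∑ j, (μ j : ℝ) * r j ^ (k : ℕ)) :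
    A.charpoly = ∏ j, (X - C (r j)) ^ μ j := by
  have hmem (i : ι) : ∃ j, r j = hA.eigenvalues i := by
    have h := hA.eval_eigenvalues_eq_zero hroot i
    rw [eval_prod, prod_eq_zero_iff] at h
    obtain ⟨j, -, hj⟩ := h
    exact ⟨j, (sub_eq_zero.mp (by simpa using hj)).symm⟩
  choose g hg using hmem
  have hsum (f : ℝ → ℝ) :
      ∑ i, f (hA.eigenvalues i) = ∑ j, (#{i | g i = j} : ℝ) * f (r j) := by
    simp_rw [← hg, ← sum_fiberwise' univ g (fun j => f (r j)), sum_const, nsmul_eq_mul]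
  have hcount (j : Fin m) : #{i | g i = j} = μ j := by
    have hzero : (fun j => (#{i | g i = j} : ℝ) - μ j) = 0 := by
      refine Matrix.eq_zero_of_forall_pow_sum_mul_pow_eq_zero hr fun k => ?_
      have h := htrace k
      rw [hA.trace_pow_eq_sum_eigenvalues_pow] at h
      simp only [RCLike.ofReal_real_eq_id, id] at h
      rw [hsum (· ^ (k : ℕ))] at h
      simp_rw [sub_mul, sum_sub_distrib]
      simpa [sub_eq_zero] using h
    exact_mod_cast sub_eq_zero.mp (congrFun hzero j)
  rw [hA.charpoly_eq]
  simp_rw [RCLike.ofReal_real_eq_id, id, ← hg, ← prod_fiberwise' univ g (fun j => X - C (r j)),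
    prod_const, hcount]

end Matrix.IsHermitian

namespace ArrangementGraph

abbrev Vertex (n : ℕ) := {π : Fin 2 → Fin n // Function.Injective π}

variable {R : Type*} [CommRing R] {n : ℕ}

lemma fin_two_eq_or_eq_of_ne {t t' : Fin 2} (h : t ≠ t') (i : Fin 2) : i = t ∨ i = t' := by
  omega

lemma card_vertex : Fintype.card (Vertex n) = n * (n - 1) := by
  rw [Fintype.card_congr (Equiv.subtypeInjectiveEquivEmbedding _ _), Fintype.card_embedding_eq]
  simp [Nat.descFactorial, mul_comm]

lemma card_filter_coord_eq_and {t t' : Fin 2} (h : t ≠ t') (a b : Fin n) :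
    #{x : Vertex n | x.1 t = a ∧ x.1 t' = b} = if a = b then 0 else 1 := by
  split_ifs with hab
  · refine card_eq_zero.mpr (filter_eq_empty_iff.mpr fun x _ hx => h (x.2 ?_))
    rw [hx.1, hx.2, hab]
  · have hinj : Function.Injective fun i => if i = t then a else b := by
      intro i j hij
      rcases fin_two_eq_or_eq_of_ne h i with rfl | rfl <;>
        rcases fin_two_eq_or_eq_of_ne h j with rfl | rfl <;> simp_all [h.symm]
    refine card_eq_one.mpr ⟨⟨_, hinj⟩, ?_⟩
    ext x
    simp only [mem_filter, mem_univ, true_and, mem_singleton, Subtype.ext_iff, funext_iff]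
    constructor
    · rintro ⟨rfl, rfl⟩ i
      rcases fin_two_eq_or_eq_of_ne h i with rfl | rfl <;> simp [h.symm]
    · intro hx
      simpa [h.symm] using And.intro (hx t) (hx t')

lemma card_filter_coord_eq (t : Fin 2) (a : Fin n) : #{x : Vertex n | x.1 t = a} = n - 1 := by
  obtain ⟨t', h⟩ : ∃ t', t ≠ t' := ⟨t + 1, by omega⟩
  rw [card_eq_sum_card_fiberwise (f := fun x : Vertex n => x.1 t') (t := univ)
    (fun _ _ => mem_univ _)]
  simp_rw [filter_filter, card_filter_coord_eq_and h]
  simp [sum_ite, ← ne_eq, filter_ne]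

lemma sum_ite_coord_eq (t : Fin 2) (a : Fin n) :
    ∑ x : Vertex n, (if x.1 t = a then (1 : R) else 0) = n - 1 := by
  rw [sum_boole, card_filter_coord_eq, Nat.cast_pred a.pos]

variable (R n)

def coordMatrix (s : Fin 2) : Matrix (Vertex n) (Fin n) R :=
  of fun v a => if v.1 s = a then 1 else 0

def agreeMatrix (s t : Fin 2) : Matrix (Vertex n) (Vertex n) R :=
  coordMatrix R n s * (coordMatrix R n t)ᵀ

def ones (ι κ : Type*) : Matrix ι κ R := of fun _ _ => 1

variable {R n}

lemma agreeMatrix_apply (s t : Fin 2) (v w : Vertex n) :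
    agreeMatrix R n s t v w = if v.1 s = w.1 t then 1 else 0 := by
  simp [agreeMatrix, coordMatrix, Matrix.mul_apply, eq_comm (a := w.1 t)]

lemma transpose_coordMatrix_mul_self (t : Fin 2) :
    (coordMatrix R n t)ᵀ * coordMatrix R n t = ((n : R) - 1) • 1 := by
  ext a b
  simp only [coordMatrix, Matrix.mul_apply, transpose_apply, of_apply, mul_ite, mul_one,
    mul_zero, ← ite_and, Matrix.smul_apply, one_apply, smul_eq_mul]
  by_cases hab : a = b
  · simp only [hab, and_self, sum_ite_coord_eq, if_true]
  · simp only [hab, if_false]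
    exact sum_eq_zero fun x _ => if_neg fun hx => hab (hx.2.symm.trans hx.1)

lemma transpose_coordMatrix_mul_of_ne {t t' : Fin 2} (h : t ≠ t') :
    (coordMatrix R n t)ᵀ * coordMatrix R n t' = ones R _ _ - 1 := by
  ext a b
  simp only [coordMatrix, ones, Matrix.mul_apply, transpose_apply, of_apply, mul_ite, mul_one,
    mul_zero, ← ite_and, Matrix.sub_apply, one_apply]
  rw [sum_boole, card_filter_coord_eq_and h.symm]
  by_cases hab : a = b <;> simp [hab, eq_comm]

lemma transpose_coordMatrix_mul_ones (t : Fin 2) (κ : Type*) :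
    (coordMatrix R n t)ᵀ * ones R (Vertex n) κ = ((n : R) - 1) • ones R _ _ := by
  ext a b
  simp only [coordMatrix, ones, Matrix.mul_apply, transpose_apply, of_apply, mul_one,
    sum_ite_coord_eq, Matrix.smul_apply, smul_eq_mul]

lemma coordMatrix_mul_ones (s : Fin 2) (κ : Type*) :
    coordMatrix R n s * ones R (Fin n) κ = ones R _ _ := by
  ext v i
  simp [coordMatrix, ones, Matrix.mul_apply]

lemma ones_mul_transpose_coordMatrix (s : Fin 2) (ι : Type*) :
    ones R ι (Fin n) * (coordMatrix R n s)ᵀ = ones R _ _ := by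
  ext i v
  simp [coordMatrix, ones, Matrix.mul_apply]

lemma agreeMatrix_mul_agreeMatrix (s t u : Fin 2) :
    agreeMatrix R n s t * agreeMatrix R n t u = ((n : R) - 1) • agreeMatrix R n s u := by
  rw [agreeMatrix, agreeMatrix, Matrix.mul_assoc, ← Matrix.mul_assoc (coordMatrix R n t)ᵀ,
    transpose_coordMatrix_mul_self, Matrix.smul_mul, Matrix.one_mul, Matrix.mul_smul, agreeMatrix]

lemma agreeMatrix_mul_agreeMatrix_of_ne (s u : Fin 2) {t t' : Fin 2} (h : t ≠ t') :
    agreeMatrix R n s t * agreeMatrix R n t' u = ones R _ _ - agreeMatrix R n s u := by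
  rw [agreeMatrix, agreeMatrix, Matrix.mul_assoc, ← Matrix.mul_assoc (coordMatrix R n t)ᵀ,
    transpose_coordMatrix_mul_of_ne h, Matrix.sub_mul, Matrix.mul_sub, Matrix.one_mul,
    ← Matrix.mul_assoc, coordMatrix_mul_ones, ones_mul_transpose_coordMatrix, agreeMatrix]

lemma agreeMatrix_mul_ones (s t : Fin 2) :
    agreeMatrix R n s t * ones R _ _ = ((n : R) - 1) • ones R (Vertex n) (Vertex n) := by
  rw [agreeMatrix, Matrix.mul_assoc, transpose_coordMatrix_mul_ones, Matrix.mul_smul,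
    coordMatrix_mul_ones]

lemma trace_agreeMatrix (s t : Fin 2) :
    (agreeMatrix R n s t).trace = if s = t then (n : R) * (n - 1) else 0 := by
  rw [agreeMatrix, trace_mul_comm]
  split_ifs with h
  · rw [h, transpose_coordMatrix_mul_self, trace_smul, trace_one, Fintype.card_fin, smul_eq_mul,
      mul_comm]
  · rw [transpose_coordMatrix_mul_of_ne (Ne.symm h), trace_sub, trace_one]
    simp [ones, trace]

lemma trace_ones : (ones R (Vertex n) (Vertex n)).trace = (n : R) * (n - 1) := by
  simp only [ones, trace, diag_apply, of_apply, sum_const, card_univ, card_vertex, nsmul_eq_mul,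
    mul_one]
  rcases n with _ | n <;> simp

variable (R n)

def agreementMatrix : Matrix (Vertex n) (Vertex n) R :=
  agreeMatrix R n 0 0 + agreeMatrix R n 1 1

def crossMatrix : Matrix (Vertex n) (Vertex n) R :=
  agreeMatrix R n 0 1 + agreeMatrix R n 1 0

variable {R n}

lemma agreementMatrix_mul_self :
    agreementMatrix R n * agreementMatrix R n =
      ((n : R) - 1) • agreementMatrix R n + 2 • ones R _ _ - crossMatrix R n := by
  simp only [agreementMatrix, crossMatrix, Matrix.add_mul, Matrix.mul_add,
    agreeMatrix_mul_agreeMatrix, agreeMatrix_mul_agreeMatrix_of_ne _ _ Fin.zero_ne_one,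
    agreeMatrix_mul_agreeMatrix_of_ne _ _ Fin.zero_ne_one.symm]
  module

lemma agreementMatrix_mul_ones :
    agreementMatrix R n * ones R _ _ = (2 * ((n : R) - 1)) • ones R (Vertex n) (Vertex n) := by
  simp only [agreementMatrix, Matrix.add_mul, agreeMatrix_mul_ones]
  module

lemma agreementMatrix_mul_crossMatrix :
    agreementMatrix R n * crossMatrix R n =
      ((n : R) - 1) • crossMatrix R n + 2 • ones R _ _ - agreementMatrix R n := by
  simp only [agreementMatrix, crossMatrix, Matrix.add_mul, Matrix.mul_add,
    agreeMatrix_mul_agreeMatrix, agreeMatrix_mul_agreeMatrix_of_ne _ _ Fin.zero_ne_one,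
    agreeMatrix_mul_agreeMatrix_of_ne _ _ Fin.zero_ne_one.symm]
  module

lemma isSymm_agreementMatrix : (agreementMatrix R n).IsSymm := by
  simp [IsSymm, agreementMatrix, agreeMatrix, transpose_mul]

lemma adj_iff {v w : Vertex n} :
    (arrangementGraph n 2).Adj v w ↔ (v.1 0 = w.1 0 ↔ v.1 1 ≠ w.1 1) := by
  simp only [arrangementGraph, ExistsUnique, Fin.exists_fin_two, Fin.forall_fin_two]
  tauto

lemma vertex_eq_iff {v w : Vertex n} : v = w ↔ v.1 0 = w.1 0 ∧ v.1 1 = w.1 1 := by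
  simp [Subtype.ext_iff, funext_iff, Fin.forall_fin_two]

theorem adjMatrix_eq_agreementMatrix_sub :
    (arrangementGraph n 2).adjMatrix R = agreementMatrix R n - scalar _ 2 := by
  ext v w
  simp only [SimpleGraph.adjMatrix_apply, agreementMatrix, Matrix.sub_apply, Matrix.add_apply,
    agreeMatrix_apply, scalar_apply, diagonal_apply, adj_iff, vertex_eq_iff]
  by_cases h0 : v.1 0 = w.1 0 <;> by_cases h1 : v.1 1 = w.1 1 <;> norm_num [h0, h1]

lemma aeval_agreementMatrix :
    aeval (agreementMatrix R n)
      ((X - C (2 * ((n : R) - 1))) * (X - C (n : R)) * (X - C ((n : R) - 2)) * X) = 0 := by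
  set S := agreementMatrix R n
  have h₁ : (S - ((n : R) - 2) • 1) * S = S + 2 • ones R _ _ - crossMatrix R n := by
    rw [Matrix.sub_mul, agreementMatrix_mul_self, Matrix.smul_mul, Matrix.one_mul]
    module
  have h₂ : (S - (n : R) • 1) * (S + 2 • ones R _ _ - crossMatrix R n) =
      (2 * (n : R) - 4) • ones R _ _ := by
    rw [Matrix.sub_mul, Matrix.mul_sub, Matrix.mul_add, Matrix.mul_smul, agreementMatrix_mul_self,
      agreementMatrix_mul_ones, agreementMatrix_mul_crossMatrix, Matrix.smul_mul, Matrix.one_mul]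
    module
  have h₃ : (S - (2 * ((n : R) - 1)) • 1) * ones R _ _ = 0 := by
    rw [Matrix.sub_mul, agreementMatrix_mul_ones, Matrix.smul_mul, Matrix.one_mul, sub_self]
  rw [show (X - C (2 * ((n : R) - 1))) * (X - C (n : R)) * (X - C ((n : R) - 2)) * X =
      (X - C (2 * ((n : R) - 1))) * ((X - C (n : R)) * ((X - C ((n : R) - 2)) * X)) by ring]
  simp only [map_mul (aeval (R := R) S), map_sub (aeval (R := R) S), aeval_X, aeval_C,
    Algebra.algebraMap_eq_smul_one]
  rw [h₁, h₂, Matrix.mul_smul, h₃, smul_zero]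

lemma trace_agreementMatrix : (agreementMatrix R n).trace = 2 * ((n : R) * (n - 1)) := by
  simp only [agreementMatrix, trace_add, trace_agreeMatrix, if_true]
  ring

lemma trace_crossMatrix : (crossMatrix R n).trace = 0 := by
  simp [crossMatrix, trace_agreeMatrix]

lemma trace_agreementMatrix_sq :
    (agreementMatrix R n ^ 2).trace = 2 * (n : R) ^ 2 * (n - 1) := by
  rw [sq, agreementMatrix_mul_self, trace_sub, trace_add, trace_smul, trace_smul,
    trace_agreementMatrix, trace_ones, trace_crossMatrix, smul_eq_mul, nsmul_eq_mul]
  ring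

lemma trace_agreementMatrix_pow_three :
    (agreementMatrix R n ^ 3).trace = 2 * (n : R) * (n - 1) ^ 2 * (n + 2) := by
  rw [pow_three, agreementMatrix_mul_self, Matrix.mul_sub, Matrix.mul_add, Matrix.mul_smul,
    Matrix.mul_smul, ← sq, agreementMatrix_mul_ones, agreementMatrix_mul_crossMatrix]
  simp only [trace_sub, trace_add, trace_smul, trace_agreementMatrix_sq, trace_agreementMatrix,
    trace_ones, trace_crossMatrix]
  simp only [smul_eq_mul, nsmul_eq_mul]
  ring

theorem charpoly_agreementMatrix (hn : 3 ≤ n) :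
    (agreementMatrix ℝ n).charpoly = (X - C (2 * ((n : ℝ) - 1))) * (X - C (n : ℝ)) ^ (n - 1) *
      (X - C ((n : ℝ) - 2)) ^ (n - 1) * X ^ (n ^ 2 - 3 * n + 1) := by
  have hn' : (3 : ℝ) ≤ n := by exact_mod_cast hn
  have hS : (agreementMatrix ℝ n).IsHermitian :=
    isHermitian_iff_isSymm.mpr isSymm_agreementMatrix
  have h := hS.charpoly_eq_prod_pow_of_trace_pow (r := ![2 * ((n : ℝ) - 1), n, n - 2, 0]) ?_
    ![1, n - 1, n - 1, n ^ 2 - 3 * n + 1] ?_ ?_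
  · simpa [Fin.prod_univ_four] using h
  · refine StrictAnti.injective (Fin.strictAnti_iff_succ_lt.mpr fun i => ?_)
    fin_cases i
    · show (n : ℝ) < 2 * ((n : ℝ) - 1); linarith
    · show (n : ℝ) - 2 < n; linarith
    · show (0 : ℝ) < n - 2; linarith
  · simpa [Fin.prod_univ_four] using aeval_agreementMatrix (R := ℝ) (n := n)
  · have h1 : 1 ≤ n := by omega
    have h3 : 3 * n ≤ n ^ 2 := by nlinarith
    intro k
    fin_cases k <;>
      simp only [Fin.sum_univ_four, Matrix.cons_val, pow_zero, pow_one, trace_one, card_vertex,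
        trace_agreementMatrix, trace_agreementMatrix_sq, trace_agreementMatrix_pow_three] <;>
      push_cast [Nat.cast_sub h1, Nat.cast_sub h3] <;> ring

end ArrangementGraph

/-- For `n ≥ 3`, the eigenvalues of `A(n,2)` are `2n-4` (multiplicity `1`), `n-2`
(multiplicity `n-1`), `n-4` (multiplicity `n-1`) and `-2` (multiplicity `n²-3n+1`),
stated as a factorization of the characteristic polynomial of its adjacency matrix. -/
theorem arrangementGraph_two_eigenvalues (n : ℕ) (hn : 3 ≤ n) :
    ((arrangementGraph n 2).adjMatrix ℤ).charpoly =
      (X - C (2 * (n : ℤ) - 4)) * (X - C ((n : ℤ) - 2)) ^ (n - 1) *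
        (X - C ((n : ℤ) - 4)) ^ (n - 1) * (X + C 2) ^ (n ^ 2 - 3 * n + 1) := by
  apply Polynomial.map_injective (Int.castRingHom ℝ) Int.cast_injective
  have hA : ((arrangementGraph n 2).adjMatrix ℤ).map (Int.castRingHom ℝ) =
      ArrangementGraph.agreementMatrix ℝ n - scalar _ 2 := by
    rw [← ArrangementGraph.adjMatrix_eq_agreementMatrix_sub]
    ext v w
    simp [apply_ite]
  rw [← charpoly_map, hA, charpoly_sub_scalar, ArrangementGraph.charpoly_agreementMatrix hn]
  have hshift (a : ℝ) : X + C 2 - C a = X - C (a - 2) := by rw [C_sub]; ring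
  simp only [mul_comp, pow_comp, sub_comp, X_comp, C_comp, hshift, Polynomial.map_mul,
    Polynomial.map_pow, Polynomial.map_sub, Polynomial.map_add, Polynomial.map_X,
    Polynomial.map_C, Int.coe_castRingHom]
  push_cast
  ring_nf
end

section
/- Partitioning the vertices of A(n,k) according to the image of each injection (two k-permutations are in the same cell iff they have the same image set) yields an equitable partition whose quotient matrix is the adjacency matrix of the Johnson graph J(n,k). In particular, if the images of π and ρ intersect in exactly k-1 elements then π has exactly one neighbor among the permutations of Im(ρ), and if |Im(π)∩Im(ρ)| < k-1 then π has no neighbor among the permutations of Im(ρ). -/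
attribute [local instance] Classical.propDecidable



/-!
A neighbour of `π` in `A(n,k)` is `π` with one value `π i` replaced by some `b ∉ Im π`, so its
image is `Im π` with `π i` exchanged for `b`. It therefore lies in the cell of `ρ` iff
`Im π \ Im ρ = {π i}` and `Im ρ \ Im π = {b}`. Since both images have `k` elements, such `i` and
`b` exist iff `|Im π ∩ Im ρ| = k - 1`, and then they are unique, hence so is the neighbour.
-/

open Finset Function

namespace Finset

variable {α : Type*} [DecidableEq α] {s t : Finset α} {a b : α}

theorem insert_erase_eq_iff (ha : a ∈ s) (hb : b ∉ s) :
    insert b (s.erase a) = t ↔ s \ t = {a} ∧ t \ s = {b} := by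
  constructor
  · rintro rfl
    constructor <;> ext x <;> simp only [mem_sdiff, mem_insert, mem_erase, mem_singleton] <;>
      grind
  · rintro ⟨hst, hts⟩
    rw [erase_eq, ← hst, sdiff_sdiff_right_self, insert_eq, ← hts, inf_eq_inter, inter_comm,
      sdiff_union_inter]

theorem card_inter_eq_card_sub_one_iff (hst : #s = #t) (hs : 0 < #s) :
    #(s ∩ t) = #s - 1 ↔ ∃ a b, s \ t = {a} ∧ t \ s = {b} := by
  have hs' := card_sdiff_add_card_inter s t
  have ht' := card_sdiff_add_card_inter t s
  rw [inter_comm] at ht'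
  constructor
  · intro h
    obtain ⟨a, ha⟩ := card_eq_one.1 (show #(s \ t) = 1 by omega)
    obtain ⟨b, hb⟩ := card_eq_one.1 (show #(t \ s) = 1 by omega)
    exact ⟨a, b, ha, hb⟩
  · rintro ⟨a, b, ha, -⟩
    rw [ha, card_singleton] at hs'
    omega

end Finset

theorem Function.Injective.update {ι α : Type*} [DecidableEq ι] {f : ι → α} {b : α}
    (hf : Injective f) (i : ι) (hb : b ∉ Set.range f) :
    Injective (update f i b) := by
  intro x y hxy
  by_cases hx : x = i <;> by_cases hy : y = i
  · rw [hx, hy]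
  · rw [hx, update_self, update_of_ne hy] at hxy
    exact absurd ⟨y, hxy.symm⟩ hb
  · rw [hy, update_self, update_of_ne hx] at hxy
    exact absurd ⟨x, hxy⟩ hb
  · rwa [update_of_ne hx, update_of_ne hy, hf.eq_iff] at hxy

section ImageUpdate

variable {ι α : Type*} [Fintype ι] [DecidableEq ι] [DecidableEq α] {f : ι → α} {i : ι} {b : α}

theorem image_update_eq_insert_erase (hf : Injective f) (i : ι) (b : α) :
    univ.image (update f i b) = insert b ((univ.image f).erase (f i)) := by
  conv_lhs => rw [← insert_erase (mem_univ i), image_insert, update_self]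
  rw [← image_erase hf]
  congr 1
  exact image_congr fun j hj => update_of_ne (ne_of_mem_erase hj) b f

theorem notMem_image_of_injective_update (h : Injective (update f i b)) (hb : b ≠ f i) :
    b ∉ univ.image f := by
  simp only [mem_image, mem_univ, true_and, not_exists]
  intro j hj
  have hji : j ≠ i := by rintro rfl; exact hb hj.symm
  exact hji (h (by rw [update_self, update_of_ne hji, hj]))

theorem image_update_eq_iff (hf : Injective f) (h : Injective (update f i b)) (hb : b ≠ f i)
    (t : Finset α) :
    univ.image (update f i b) = t ↔ univ.image f \ t = {f i} ∧ t \ univ.image f = {b} := by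
  rw [image_update_eq_insert_erase hf,
    insert_erase_eq_iff (mem_image_of_mem f (mem_univ i)) (notMem_image_of_injective_update h hb)]

end ImageUpdate

theorem arrangementGraph_adj_iff {n k : ℕ} {π τ : {π : Fin k → Fin n // Injective π}} :
    (arrangementGraph n k).Adj π τ ↔ ∃ i, π.1 i ≠ τ.1 i ∧ τ.1 = update π.1 i (τ.1 i) := by
  constructor
  · rintro ⟨i, hi, hu⟩
    refine ⟨i, hi, funext fun j => ?_⟩
    by_cases hj : j = i
    · subst hj; simp
    · rw [update_of_ne hj]
      by_contra h
      exact hj (hu j (Ne.symm h))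
  · rintro ⟨i, hi, hτ⟩
    refine ⟨i, hi, fun j hj => ?_⟩
    by_contra hji
    exact hj (by rw [hτ, update_of_ne hji])

theorem arrangementGraph_adj_and_image_eq_iff {n k : ℕ} {π τ : {π : Fin k → Fin n // Injective π}}
    {t : Finset (Fin n)} :
    (arrangementGraph n k).Adj π τ ∧ univ.image τ.1 = t ↔
      ∃ i, π.1 i ≠ τ.1 i ∧ τ.1 = update π.1 i (τ.1 i) ∧
        univ.image π.1 \ t = {π.1 i} ∧ t \ univ.image π.1 = {τ.1 i} := by
  rw [arrangementGraph_adj_iff]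
  constructor
  · rintro ⟨⟨i, hi, hτ⟩, rfl⟩
    refine ⟨i, hi, hτ, ?_⟩
    rw [← image_update_eq_iff π.2 (hτ ▸ τ.2) (Ne.symm hi), ← hτ]
  · rintro ⟨i, hi, hτ, hst⟩
    refine ⟨⟨i, hi, hτ⟩, ?_⟩
    rw [hτ, image_update_eq_iff π.2 (hτ ▸ τ.2) (Ne.symm hi)]
    exact hst

theorem imagePartition_equitable_johnson_general (n k : ℕ) (hk : 1 ≤ k)
    (π ρ : {π : Fin k → Fin n // Function.Injective π}) :
    Nat.card {τ : {π : Fin k → Fin n // Function.Injective π} //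
        (arrangementGraph n k).Adj π τ ∧
          Finset.image τ.1 Finset.univ = Finset.image ρ.1 Finset.univ} =
      if (Finset.image π.1 Finset.univ ∩ Finset.image ρ.1 Finset.univ).card = k - 1
        then 1 else 0 := by
  set S := univ.image π.1
  set T := univ.image ρ.1
  have hS : #S = k := by rw [card_image_of_injective _ π.2, card_univ, Fintype.card_fin]
  have hT : #T = k := by rw [card_image_of_injective _ ρ.2, card_univ, Fintype.card_fin]
  have key := card_inter_eq_card_sub_one_iff (hS.trans hT.symm) (hS ▸ hk)
  rw [hS] at key
  split_ifs with h <;> rw [key] at h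
  · obtain ⟨a, b, ha, hb⟩ := h
    obtain ⟨i, -, rfl⟩ := mem_image.1 (sdiff_subset (ha ▸ mem_singleton_self _))
    have hbS : b ∉ S := (mem_sdiff.1 (hb ▸ mem_singleton_self b)).2
    have hbi : b ≠ π.1 i := fun h => hbS (h ▸ mem_image_of_mem _ (mem_univ i))
    have hinj : Injective (update π.1 i b) := π.2.update i (by simpa [S] using hbS)
    rw [Nat.card_eq_one_iff_exists]
    refine ⟨⟨⟨update π.1 i b, hinj⟩, arrangementGraph_adj_and_image_eq_iff.2
      ⟨i, by simpa using hbi.symm, by simp, ha, by simpa using hb⟩⟩, ?_⟩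
    rintro ⟨τ, hτ⟩
    obtain ⟨j, -, hτj, hj, hτb⟩ := arrangementGraph_adj_and_image_eq_iff.1 hτ
    obtain rfl : j = i := π.2 (singleton_injective (hj.symm.trans ha))
    obtain rfl : τ.1 j = b := singleton_injective (hτb.symm.trans hb)
    exact Subtype.ext (Subtype.ext hτj)
  · refine Nat.card_eq_zero.2 (Or.inl ⟨fun ⟨τ, hτ⟩ => h ?_⟩)
    obtain ⟨i, -, -, hi, hτi⟩ := arrangementGraph_adj_and_image_eq_iff.1 hτ
    exact ⟨_, _, hi, hτi⟩

/-- The partition of the vertices of `A(n,k)` by image sets is equitable with quotient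
matrix the adjacency matrix of the Johnson graph `J(n,k)`: the number of neighbors of
`π` having the same image as `ρ` is `1` if `|Im π ∩ Im ρ| = k-1` and `0` otherwise
(in particular it is `0` whenever `|Im π ∩ Im ρ| < k-1`, and `0` within a cell). -/
theorem imagePartition_equitable_johnson (n k : ℕ) (hk : 1 ≤ k) (hkn : k ≤ n)
    (π ρ : {π : Fin k → Fin n // Function.Injective π}) :
    Nat.card {τ : {π : Fin k → Fin n // Function.Injective π} //
        (arrangementGraph n k).Adj π τ ∧
          Finset.image τ.1 Finset.univ = Finset.image ρ.1 Finset.univ} =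
      if (Finset.image π.1 Finset.univ ∩ Finset.image ρ.1 Finset.univ).card = k - 1
        then 1 else 0 :=
  imagePartition_equitable_johnson_general n k hk π ρ
end
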